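/- Let H be the completion of C_c^∞((0,∞), ℂ) with respect to the inner product ⟨w, w̃⟩₁ = ∫₀^∞ ( \overline{w'} w̃' + t² \overline{w} w̃ ) dt. Then H embeds compactly into L²((0,∞), ℂ). -/

import Mathlib

open MeasureTheory Filter Topology Set

section Stmt15Aux

variable {w : ℝ → ℂ}

private lemma stmt15_integrable_derivSq (h1 : ContDiff ℝ (⊤ : ℕ∞) w) (h2 : HasCompactSupport w) :
    Integrable (fun t : ℝ => ‖deriv w t‖ ^ 2) := by
  have hc : Continuous (deriv w) := h1.continuous_deriv (by simp)
  have hcs : HasCompactSupport (deriv w) := h2.deriv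
  have : HasCompactSupport (fun t : ℝ => ‖deriv w t‖ ^ 2) :=
    hcs.comp_left (g := fun z : ℂ => ‖z‖ ^ 2) (by simp)
  exact Continuous.integrable_of_hasCompactSupport (by fun_prop) this

private lemma stmt15_integrable_weight (h2 : HasCompactSupport w) (hc : Continuous w) :
    Integrable (fun t : ℝ => t ^ 2 * ‖w t‖ ^ 2) := by
  have hcs : HasCompactSupport (fun t : ℝ => ‖w t‖ ^ 2) :=
    h2.comp_left (g := fun z : ℂ => ‖z‖ ^ 2) (by simp)
  have : HasCompactSupport (fun t : ℝ => t ^ 2 * ‖w t‖ ^ 2) := by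
    apply HasCompactSupport.mul_left hcs
  exact Continuous.integrable_of_hasCompactSupport (by fun_prop) this

private lemma stmt15_integrable_sq (h2 : HasCompactSupport w) (hc : Continuous w) :
    Integrable (fun t : ℝ => ‖w t‖ ^ 2) := by
  have hcs : HasCompactSupport (fun t : ℝ => ‖w t‖ ^ 2) :=
    h2.comp_left (g := fun z : ℂ => ‖z‖ ^ 2) (by simp)
  exact Continuous.integrable_of_hasCompactSupport (by fun_prop) hcs

private lemma stmt15_derivSq_le (h1 : ContDiff ℝ (⊤ : ℕ∞) w) (h2 : HasCompactSupport w)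
    (hb : ∫ t in Ioi (0:ℝ), (‖deriv w t‖ ^ 2 + t ^ 2 * ‖w t‖ ^ 2) ≤ 1) :
    ∫ t in Ioi (0:ℝ), ‖deriv w t‖ ^ 2 ≤ 1 := by
  refine le_trans ?_ hb
  rw [integral_add ((stmt15_integrable_derivSq h1 h2).restrict)
    ((stmt15_integrable_weight h2 h1.continuous).restrict)]
  have : 0 ≤ ∫ t in Ioi (0:ℝ), t ^ 2 * ‖w t‖ ^ 2 :=
    integral_nonneg fun t => by positivity
  linarith

private lemma stmt15_weight_le (h1 : ContDiff ℝ (⊤ : ℕ∞) w) (h2 : HasCompactSupport w)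
    (hb : ∫ t in Ioi (0:ℝ), (‖deriv w t‖ ^ 2 + t ^ 2 * ‖w t‖ ^ 2) ≤ 1) :
    ∫ t in Ioi (0:ℝ), t ^ 2 * ‖w t‖ ^ 2 ≤ 1 := by
  refine le_trans ?_ hb
  rw [integral_add ((stmt15_integrable_derivSq h1 h2).restrict)
    ((stmt15_integrable_weight h2 h1.continuous).restrict)]
  have : 0 ≤ ∫ t in Ioi (0:ℝ), ‖deriv w t‖ ^ 2 :=
    integral_nonneg fun t => by positivity
  linarith

private lemma stmt15_holder (h1 : ContDiff ℝ (⊤ : ℕ∞) w) (h2 : HasCompactSupport w)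
    (hd : ∫ t in Ioi (0:ℝ), ‖deriv w t‖ ^ 2 ≤ 1) {s t : ℝ} (hs : 0 ≤ s) (hst : s ≤ t) :
    ‖w t - w s‖ ≤ Real.sqrt (t - s) := by
  have hderiv : Continuous (deriv w) := h1.continuous_deriv (by simp)
  have hftc : ∫ u in s..t, deriv w u = w t - w s :=
    intervalIntegral.integral_deriv_eq_sub
      (fun x _ => (h1.differentiable (by simp)).differentiableAt)
      (hderiv.intervalIntegrable s t)
  have h3 : ‖w t - w s‖ ≤ ∫ u in Ioc s t, ‖deriv w u‖ := by
    rw [← hftc, intervalIntegral.integral_of_le hst]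
    exact norm_integral_le_integral_norm _
  refine h3.trans ?_
  set μ := volume.restrict (Ioc s t)
  have hmem : MemLp (fun u => ‖deriv w u‖) (ENNReal.ofReal 2) μ :=
    ((hderiv.norm.memLp_of_hasCompactSupport (μ := volume) (p := ENNReal.ofReal 2)
      (h2.deriv.comp_left (by simp))).restrict _)
  have hCS := integral_mul_le_Lp_mul_Lq_of_nonneg (μ := μ)
    Real.HolderConjugate.two_two
    (Eventually.of_forall fun u => norm_nonneg _)
    (Eventually.of_forall fun u => zero_le_one)
    hmem (memLp_const 1)
  simp only [mul_one] at hCS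
  refine hCS.trans ?_
  have hone : ∫ _u, (1:ℝ) ^ (2:ℝ) ∂μ = t - s := by
    simp [μ, Real.volume_Ioc, ENNReal.toReal_ofReal (by linarith : (0:ℝ) ≤ t - s), hst]
  have hpow : ∫ u, ‖deriv w u‖ ^ (2:ℝ) ∂μ = ∫ u, ‖deriv w u‖ ^ 2 ∂μ := by
    refine integral_congr_ae (Eventually.of_forall fun u => ?_)
    show ‖deriv w u‖ ^ (2:ℝ) = ‖deriv w u‖ ^ (2:ℕ)
    rw [show (2:ℝ) = ((2:ℕ):ℝ) by norm_num, Real.rpow_natCast]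
  have hA : ∫ u, ‖deriv w u‖ ^ 2 ∂μ ≤ 1 := by
    refine le_trans ?_ hd
    refine setIntegral_mono_set ?_ (Eventually.of_forall fun u => by positivity) ?_
    · have hcs : HasCompactSupport (fun u : ℝ => ‖deriv w u‖ ^ 2) :=
        h2.deriv.comp_left (g := fun z : ℂ => ‖z‖ ^ 2) (by simp)
      exact (Continuous.integrable_of_hasCompactSupport (by fun_prop) hcs).integrableOn
    · exact HasSubset.Subset.eventuallyLE (fun u hu => lt_of_le_of_lt hs hu.1)
  have hAnn : 0 ≤ ∫ u, ‖deriv w u‖ ^ 2 ∂μ := integral_nonneg fun u => by positivity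
  rw [hone, hpow]
  have h5 : (∫ u, ‖deriv w u‖ ^ 2 ∂μ) ^ (1/(2:ℝ)) ≤ 1 := by
    have := Real.rpow_le_rpow hAnn hA (by norm_num : (0:ℝ) ≤ 1/2)
    rwa [Real.one_rpow] at this
  calc (∫ u, ‖deriv w u‖ ^ 2 ∂μ) ^ (1/(2:ℝ)) * (t - s) ^ (1/(2:ℝ))
      ≤ 1 * (t - s) ^ (1/(2:ℝ)) :=
        mul_le_mul_of_nonneg_right h5 (Real.rpow_nonneg (by linarith) _)
    _ = Real.sqrt (t - s) := by rw [one_mul, Real.sqrt_eq_rpow]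

private lemma stmt15_ptwise (h1 : ContDiff ℝ (⊤ : ℕ∞) w) (h2 : HasCompactSupport w)
    (h3 : tsupport w ⊆ Ioi 0)
    (hd : ∫ t in Ioi (0:ℝ), ‖deriv w t‖ ^ 2 ≤ 1) {t : ℝ} (ht : 0 ≤ t) :
    ‖w t‖ ≤ Real.sqrt t := by
  have h0 : w 0 = 0 :=
    image_eq_zero_of_notMem_tsupport fun h => lt_irrefl (0:ℝ) (h3 h)
  have := stmt15_holder h1 h2 hd le_rfl ht
  rwa [h0, sub_zero, sub_zero] at this

private lemma stmt15_tail (h2 : HasCompactSupport w) (hc : Continuous w)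
    (hwt : ∫ t in Ioi (0:ℝ), t ^ 2 * ‖w t‖ ^ 2 ≤ 1) {R : ℝ} (hR : 0 < R) :
    ∫ t in Ioi R, ‖w t‖ ^ 2 ≤ 1 / R ^ 2 := by
  have h1 : ∫ t in Ioi R, ‖w t‖ ^ 2 ≤ ∫ t in Ioi R, (t ^ 2 * ‖w t‖ ^ 2) / R ^ 2 := by
    refine setIntegral_mono_on (stmt15_integrable_sq h2 hc).integrableOn
      (((stmt15_integrable_weight h2 hc).div_const _).integrableOn) measurableSet_Ioi ?_
    intro t ht
    rw [le_div_iff₀ (by positivity)]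
    have h2 : R ^ 2 ≤ t ^ 2 := by nlinarith [le_of_lt (mem_Ioi.1 ht)]
    nlinarith [sq_nonneg ‖w t‖, mul_le_mul_of_nonneg_left h2 (sq_nonneg ‖w t‖)]
  refine h1.trans ?_
  rw [integral_div]
  rw [div_le_div_iff₀ (by positivity) (by positivity), one_mul]
  have h4 : ∫ t in Ioi R, t ^ 2 * ‖w t‖ ^ 2 ≤ ∫ t in Ioi (0:ℝ), t ^ 2 * ‖w t‖ ^ 2 := by
    refine setIntegral_mono_set (stmt15_integrable_weight h2 hc).integrableOn
      (Eventually.of_forall fun t => by positivity)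
      (HasSubset.Subset.eventuallyLE (Ioi_subset_Ioi hR.le))
  nlinarith [h4.trans hwt, sq_nonneg R]

private lemma stmt15_extraction (f : ℕ → ℝ → ℂ)
    (hbd : ∀ k (q : ℚ), ‖f k (q:ℝ)‖ ≤ Real.sqrt (max (q:ℝ) 0)) :
    ∃ φ : ℕ → ℕ, StrictMono φ ∧ ∀ q : ℚ, CauchySeq (fun k => f (φ k) (q:ℝ)) := by
  set K : Set (ℚ → ℂ) := Set.pi univ fun q => Metric.closedBall 0 (Real.sqrt (max (q:ℝ) 0))
  have hK : IsCompact K := isCompact_univ_pi fun q => isCompact_closedBall _ _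
  have hmem : ∀ k, (fun q : ℚ => f k (q:ℝ)) ∈ K := fun k q _ => by
    simpa [Metric.mem_closedBall, dist_eq_norm] using hbd k q
  obtain ⟨x, -, φ, hφ, hconv⟩ := hK.tendsto_subseq hmem
  exact ⟨φ, hφ, fun q => ((tendsto_pi_nhds.1 hconv) q).cauchySeq⟩

end Stmt15Aux

set_option maxHeartbeats 1000000 in
/-- Let `H` be the completion of `C_c^∞((0,∞),ℂ)` with respect to
the inner product `⟨w, w̃⟩₁ = ∫₀^∞ (conj w' ⬝ w̃' + t² conj w ⬝ w̃) dt`.  Then `H`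
embeds compactly into `L²((0,∞),ℂ)`: every sequence of test functions bounded in the
`⟨·,·⟩₁`-norm has a subsequence which is Cauchy in `L²((0,∞),ℂ)` (hence converges in
`L²`, and the compactness passes to the completion `H`). -/
theorem stmt15 :
    ∀ f : ℕ → ℝ → ℂ,
      (∀ k, ContDiff ℝ (⊤ : ℕ∞) (f k)) →
      (∀ k, HasCompactSupport (f k)) →
      (∀ k, tsupport (f k) ⊆ Ioi 0) →
      (∀ k, ∫ t in Ioi (0:ℝ), (‖deriv (f k) t‖ ^ 2 + t ^ 2 * ‖f k t‖ ^ 2) ≤ 1) →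
      ∃ φ : ℕ → ℕ, StrictMono φ ∧
        ∀ ε > (0:ℝ), ∃ N : ℕ, ∀ j ≥ N, ∀ l ≥ N,
          ∫ t in Ioi (0:ℝ), ‖f (φ j) t - f (φ l) t‖ ^ 2 ≤ ε := by
  intro f hsm hsupp hts hbd1
  have hd : ∀ k, ∫ t in Ioi (0:ℝ), ‖deriv (f k) t‖ ^ 2 ≤ 1 :=
    fun k => stmt15_derivSq_le (hsm k) (hsupp k) (hbd1 k)
  have hwt : ∀ k, ∫ t in Ioi (0:ℝ), t ^ 2 * ‖f k t‖ ^ 2 ≤ 1 :=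
    fun k => stmt15_weight_le (hsm k) (hsupp k) (hbd1 k)
  have hbd : ∀ k (q : ℚ), ‖f k (q:ℝ)‖ ≤ Real.sqrt (max (q:ℝ) 0) := by
    intro k q
    rcases le_or_gt (q:ℝ) 0 with h | h
    · have h0 : f k (q:ℝ) = 0 :=
        image_eq_zero_of_notMem_tsupport fun hm => absurd (hts k hm) (by simpa using h)
      simp [h0, Real.sqrt_nonneg]
    · have := stmt15_ptwise (hsm k) (hsupp k) (hts k) (hd k) h.le
      rwa [max_eq_left h.le]
  obtain ⟨φ, hφ, hq⟩ := stmt15_extraction f hbd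
  refine ⟨φ, hφ, ?_⟩
  intro ε hε
  obtain ⟨R, hR⟩ := exists_rat_gt (max 1 (Real.sqrt (8/ε)))
  have hR1 : (1:ℝ) < R := lt_of_le_of_lt (le_max_left _ _) hR
  have hR0 : (0:ℝ) < R := by linarith
  have hRtail : 4 / (R:ℝ) ^ 2 ≤ ε / 2 := by
    have h8 : Real.sqrt (8/ε) < R := lt_of_le_of_lt (le_max_right _ _) hR
    have hsq := Real.sq_sqrt (by positivity : (0:ℝ) ≤ 8/ε)
    have h82 : (8:ℝ)/ε < (R:ℝ)^2 := by nlinarith [Real.sqrt_nonneg (8/ε)]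
    rw [div_le_iff₀ (by positivity)]
    have h83 : (8:ℝ) < ε * (R:ℝ)^2 := by
      rw [div_lt_iff₀ hε] at h82; linarith
    nlinarith
  set s0 := Real.sqrt (ε/(2*R)) with hs0
  have hs0pos : 0 < s0 := Real.sqrt_pos.2 (by positivity)
  have hs0sq : s0 ^ 2 = ε / (2*R) := Real.sq_sqrt (by positivity)
  obtain ⟨n, hn⟩ := exists_nat_gt (16*(R:ℝ)/s0^2)
  have hnpos : 0 < (n:ℝ) := lt_of_le_of_lt (by positivity) hn
  have hRn : Real.sqrt ((R:ℝ)/n) ≤ s0/4 := by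
    have h1 : (R:ℝ)/n ≤ (s0/4)^2 := by
      rw [div_le_iff₀ hnpos]
      rw [div_lt_iff₀ (by positivity)] at hn
      nlinarith
    calc Real.sqrt ((R:ℝ)/n) ≤ Real.sqrt ((s0/4)^2) := Real.sqrt_le_sqrt h1
      _ = s0/4 := Real.sqrt_sq (by positivity)
  set δ := s0/2 with hδdef
  have hδ : 0 < δ := by positivity
  have hgrid : ∀ i : ℕ, ∃ N, ∀ j ≥ N, ∀ l ≥ N,
      ‖f (φ j) (((i:ℚ) * R / n : ℚ):ℝ) - f (φ l) (((i:ℚ) * R / n : ℚ):ℝ)‖ ≤ δ := by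
    intro i
    obtain ⟨N, hN⟩ := Metric.cauchySeq_iff.1 (hq ((i:ℚ) * R / n)) δ hδ
    exact ⟨N, fun j hj l hl => by
      have := hN j hj l hl; rw [dist_eq_norm] at this; exact this.le⟩
  choose Ns hNs using hgrid
  refine ⟨(Finset.range (n+1)).sup Ns, ?_⟩
  intro j hj l hl
  -- pointwise bulk bound
  have hptb : ∀ t ∈ Ioc (0:ℝ) (R:ℝ), ‖f (φ j) t - f (φ l) t‖ ≤ s0 := by
    intro t ht
    set i := ⌊t * n / R⌋₊ with hidef
    have hi_le : i ≤ n := by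
      have h1 : t * n / (R:ℝ) ≤ n := by
        rw [div_le_iff₀ hR0]
        nlinarith [ht.2, hnpos]
      calc i ≤ ⌊(n:ℝ)⌋₊ := Nat.floor_le_floor h1
        _ = n := Nat.floor_natCast n
    set q : ℝ := (i:ℝ) * R / n with hqdef
    have hq0 : (0:ℝ) ≤ q := by positivity
    have h1 : (i:ℝ) ≤ t * n / R := Nat.floor_le (div_nonneg (mul_nonneg ht.1.le (Nat.cast_nonneg n)) hR0.le)
    have h1' : (i:ℝ) * R ≤ t * n := by
      rw [le_div_iff₀ hR0] at h1; exact h1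
    have hqle : q ≤ t := by
      rw [hqdef, div_le_iff₀ hnpos]; linarith
    have h2 : t * n / (R:ℝ) < i + 1 := Nat.lt_floor_add_one _
    have h2' : t * n < ((i:ℝ) + 1) * R := by
      rw [div_lt_iff₀ hR0] at h2; linarith
    have hdiff : t - q ≤ (R:ℝ)/n := by
      rw [hqdef, sub_le_iff_le_add]
      have : t ≤ ((i:ℝ) + 1) * R / n := by
        rw [le_div_iff₀ hnpos]; nlinarith
      have heq : (R:ℝ)/n + (i:ℝ) * R / n = ((i:ℝ) + 1) * R / n := by ring
      linarith
    have hcast : (((i:ℚ) * R / n : ℚ):ℝ) = q := by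
      rw [hqdef]; push_cast; ring
    have hsq1 : ‖f (φ j) t - f (φ j) q‖ ≤ s0/4 := by
      have := stmt15_holder (hsm (φ j)) (hsupp (φ j)) (hd (φ j)) hq0 hqle
      refine this.trans (le_trans ?_ hRn)
      exact Real.sqrt_le_sqrt hdiff
    have hsq2 : ‖f (φ l) t - f (φ l) q‖ ≤ s0/4 := by
      have := stmt15_holder (hsm (φ l)) (hsupp (φ l)) (hd (φ l)) hq0 hqle
      refine this.trans (le_trans ?_ hRn)
      exact Real.sqrt_le_sqrt hdiff
    have hmid : ‖f (φ j) q - f (φ l) q‖ ≤ δ := by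
      have hNsle : Ns i ≤ (Finset.range (n+1)).sup Ns :=
        Finset.le_sup (Finset.mem_range.2 (Nat.lt_succ_of_le hi_le))
      have := hNs i j (le_trans hNsle hj) l (le_trans hNsle hl)
      rwa [hcast] at this
    have hsplit : f (φ j) t - f (φ l) t =
        (f (φ j) t - f (φ j) q) + ((f (φ j) q - f (φ l) q) + (f (φ l) q - f (φ l) t)) := by
      ring
    calc ‖f (φ j) t - f (φ l) t‖
        ≤ ‖f (φ j) t - f (φ j) q‖ + (‖f (φ j) q - f (φ l) q‖ + ‖f (φ l) q - f (φ l) t‖) := by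
          rw [hsplit]; exact (norm_add_le _ _).trans (by gcongr; exact norm_add_le _ _)
      _ ≤ s0/4 + (δ + s0/4) := by
          have : ‖f (φ l) q - f (φ l) t‖ = ‖f (φ l) t - f (φ l) q‖ := norm_sub_rev _ _
          rw [this]; gcongr
      _ = s0 := by rw [hδdef]; ring
  -- integrability of the difference squared
  have hneg : HasCompactSupport (fun t => -(f (φ l) t)) :=
    (hsupp (φ l)).comp_left (g := fun z : ℂ => -z) (by simp)
  have hcsd : HasCompactSupport (fun t => f (φ j) t - f (φ l) t) := by
    simpa [sub_eq_add_neg, Pi.add_def] using (hsupp (φ j)).add hneg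
  have hcd : Continuous (fun t => f (φ j) t - f (φ l) t) :=
    ((hsm (φ j)).continuous).sub ((hsm (φ l)).continuous)
  have hintd : Integrable (fun t : ℝ => ‖f (φ j) t - f (φ l) t‖ ^ 2) :=
    stmt15_integrable_sq hcsd hcd
  -- bulk integral
  have hIbulk : ∫ t in Ioc (0:ℝ) (R:ℝ), ‖f (φ j) t - f (φ l) t‖ ^ 2 ≤ ε/2 := by
    have hle : ∫ t in Ioc (0:ℝ) (R:ℝ), ‖f (φ j) t - f (φ l) t‖ ^ 2
        ≤ ∫ _t in Ioc (0:ℝ) (R:ℝ), ε/(2*(R:ℝ)) := by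
      refine setIntegral_mono_on hintd.integrableOn
        (integrableOn_const measure_Ioc_lt_top.ne) measurableSet_Ioc ?_
      intro t ht
      have := hptb t ht
      calc ‖f (φ j) t - f (φ l) t‖ ^ 2 ≤ s0 ^ 2 := by
            exact pow_le_pow_left₀ (norm_nonneg _) this 2
        _ = ε/(2*R) := hs0sq
    refine hle.trans ?_
    rw [setIntegral_const]
    rw [measureReal_def, Real.volume_Ioc, ENNReal.toReal_ofReal (by linarith : (0:ℝ) ≤ (R:ℝ) - 0)]
    rw [smul_eq_mul]
    rw [show ((R:ℝ) - 0) = (R:ℝ) by ring]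
    rw [show (R:ℝ) * (ε/(2*(R:ℝ))) = ε/2 * ((R:ℝ)/(R:ℝ)) by ring, div_self hR0.ne', mul_one]
  -- tail integral
  have hItail : ∫ t in Ioi (R:ℝ), ‖f (φ j) t - f (φ l) t‖ ^ 2 ≤ ε/2 := by
    have hjint := stmt15_integrable_sq (hsupp (φ j)) (hsm (φ j)).continuous
    have hlint := stmt15_integrable_sq (hsupp (φ l)) (hsm (φ l)).continuous
    have hle : ∫ t in Ioi (R:ℝ), ‖f (φ j) t - f (φ l) t‖ ^ 2
        ≤ ∫ t in Ioi (R:ℝ), (2 * ‖f (φ j) t‖ ^ 2 + 2 * ‖f (φ l) t‖ ^ 2) := by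
      refine setIntegral_mono_on hintd.integrableOn
        (((hjint.const_mul 2).add (hlint.const_mul 2)).integrableOn) measurableSet_Ioi ?_
      intro t _
      have h1 : ‖f (φ j) t - f (φ l) t‖ ≤ ‖f (φ j) t‖ + ‖f (φ l) t‖ := norm_sub_le _ _
      nlinarith [norm_nonneg (f (φ j) t - f (φ l) t), norm_nonneg (f (φ j) t),
        norm_nonneg (f (φ l) t), sq_nonneg (‖f (φ j) t‖ - ‖f (φ l) t‖)]
    refine hle.trans ?_
    rw [integral_add ((hjint.const_mul 2).restrict) ((hlint.const_mul 2).restrict),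
      integral_const_mul, integral_const_mul]
    have ht1 := stmt15_tail (hsupp (φ j)) (hsm (φ j)).continuous (hwt (φ j)) hR0
    have ht2 := stmt15_tail (hsupp (φ l)) (hsm (φ l)).continuous (hwt (φ l)) hR0
    have hnn1 : (0:ℝ) ≤ ∫ t in Ioi (R:ℝ), ‖f (φ j) t‖ ^ 2 :=
      integral_nonneg fun t => by positivity
    have hnn2 : (0:ℝ) ≤ ∫ t in Ioi (R:ℝ), ‖f (φ l) t‖ ^ 2 :=
      integral_nonneg fun t => by positivity
    have : 2 * (∫ t in Ioi (R:ℝ), ‖f (φ j) t‖ ^ 2) + 2 * (∫ t in Ioi (R:ℝ), ‖f (φ l) t‖ ^ 2)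
        ≤ 4 / (R:ℝ) ^ 2 := by
      have : (2:ℝ) * (1/(R:ℝ)^2) + 2 * (1/(R:ℝ)^2) = 4/(R:ℝ)^2 := by ring
      nlinarith
    linarith
  -- combine
  have hsplit : ∫ t in Ioi (0:ℝ), ‖f (φ j) t - f (φ l) t‖ ^ 2
      = (∫ t in Ioc (0:ℝ) (R:ℝ), ‖f (φ j) t - f (φ l) t‖ ^ 2)
        + ∫ t in Ioi (R:ℝ), ‖f (φ j) t - f (φ l) t‖ ^ 2 := by
    rw [← setIntegral_union (Ioc_disjoint_Ioi le_rfl) measurableSet_Ioi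
      hintd.integrableOn hintd.integrableOn, Ioc_union_Ioi_eq_Ioi hR0.le]
  rw [hsplit]
  linarith
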